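/- arXiv:math/9404226 — 2 statements merged into one kernel-verified Lean document; each statement's English description precedes it below -/
import Mathlib

section
/- Let (A_i)_{i∈κ} be infinite Boolean algebras, D an ultrafilter on κ, λ_i = π(A_i) for each i, and suppose λ is a cardinal with λ_i ≤ λ for all i. If the ultraproduct A = ∏ A_i / D satisfies π(A) = λ, then every element f/D of the ultraproduct ∏_{i∈κ} λ_i / D is bounded below λ modulo D, i.e., there is α < λ with {i : f(i) ≤ α} ∈ D. -/
open Cardinal

universe u v

/-- The algebraic density `π A` of a Boolean algebra: the least cardinality of a
dense subset of `A \ {⊥}`. -/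
noncomputable def piDensity (A : Type v) [BooleanAlgebra A] : Cardinal.{v} :=
  sInf {c | ∃ X : Set A, (∀ x ∈ X, x ≠ ⊥) ∧ (∀ a : A, a ≠ ⊥ → ∃ x ∈ X, x ≤ a) ∧ c = #X}

section BUP

variable {ι : Type u} (D : Ultrafilter ι) (A : ι → Type u) [∀ i, BooleanAlgebra (A i)]

instance piBooleanRing : BooleanRing (∀ i, AsBoolRing (A i)) :=
  { Pi.ring with isIdempotentElem := fun f => funext fun i => BooleanRing.mul_self (f i) }

/-- The ideal of elements vanishing `D`-almost everywhere. -/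
def upIdeal : Ideal (∀ i, AsBoolRing (A i)) where
  carrier := {f | {i | f i = 0} ∈ D}
  zero_mem' := by
    have : {i | (0 : ∀ i, AsBoolRing (A i)) i = 0} = Set.univ := by ext i; simp
    simp only [Set.mem_setOf_eq] at *
    exact this ▸ Filter.univ_mem
  add_mem' := by
    intro f g hf hg
    filter_upwards [hf, hg] with i h1 h2
    simp only [Pi.add_apply, h1, h2, add_zero]
  smul_mem' := by
    intro c f hf
    filter_upwards [hf] with i h1
    simp only [smul_eq_mul, Pi.mul_apply, h1, mul_zero]

instance upQuotBooleanRing : BooleanRing ((∀ i, AsBoolRing (A i)) ⧸ upIdeal D A) :=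
  { (inferInstance : CommRing ((∀ i, AsBoolRing (A i)) ⧸ upIdeal D A)) with
    isIdempotentElem := fun a => by
      obtain ⟨f, rfl⟩ := Ideal.Quotient.mk_surjective a
      rw [IsIdempotentElem, ← map_mul, BooleanRing.mul_self] }

/-- The Boolean ultraproduct `∏ᵢ Aᵢ / D`. -/
def BUP : Type u := AsBoolAlg ((∀ i, AsBoolRing (A i)) ⧸ upIdeal D A)

noncomputable instance : BooleanAlgebra (BUP D A) :=
  inferInstanceAs (BooleanAlgebra (AsBoolAlg _))

end BUP

section cardUP

variable {ι : Type u} (D : Ultrafilter ι)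

/-- Set-theoretic ultraproduct of a family of cardinals, seen as the quotient of the
product of the corresponding sets of ordinals by `D`-almost-everywhere equality. -/
def cardSetoid (lam : ι → Cardinal.{u}) :
    Setoid (∀ i, (lam i).ord.ToType) where
  r f g := {i | f i = g i} ∈ D
  iseqv := by
    refine ⟨fun f => by
      have : {i | f i = f i} = Set.univ := by ext i; simp
      rw [this]; exact Filter.univ_mem, fun {f g} h => ?_, fun {f g h} h1 h2 => ?_⟩
    · filter_upwards [h] with i hi using hi.symm
    · filter_upwards [h1, h2] with i hi1 hi2 using hi1.trans hi2

/-- The cardinality of the ultraproduct `∏ᵢ λᵢ / D` of a family of cardinals. -/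
noncomputable def cardUP (lam : ι → Cardinal.{u}) : Cardinal.{u} :=
  #(Quotient (cardSetoid D lam))

end cardUP

/-! Enumerate a dense subset `X` of `∏ Aᵢ / D` of size `λ` injectively by ordinals below `λ`.
For each `i`, fewer than `π(Aᵢ)` elements of `X` have index below `f i`, so their `i`-th
coordinates are not dense in `Aᵢ`: some `cᵢ ≠ 0` lies above none of the nonzero ones. Some
`x ∈ X` lies below `c/D`; then `xᵢ ≤ cᵢ` and `xᵢ ≠ 0` for `D`-almost all `i`, which forces
`f i` to be at most the index of `x` there. -/

open Function

section Density

variable {B : Type v} [BooleanAlgebra B]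

theorem exists_dense_mk_eq_piDensity :
    ∃ X : Set B, (∀ x ∈ X, x ≠ ⊥) ∧ (∀ a : B, a ≠ ⊥ → ∃ x ∈ X, x ≤ a) ∧ #X = piDensity B := by
  obtain ⟨X, hX0, hXdense, hX⟩ := csInf_mem (s := {c | ∃ X : Set B, (∀ x ∈ X, x ≠ ⊥) ∧
      (∀ a : B, a ≠ ⊥ → ∃ x ∈ X, x ≤ a) ∧ c = #X})
    ⟨_, {a | a ≠ ⊥}, fun _ hx => hx, fun a ha => ⟨a, ha, le_rfl⟩, rfl⟩
  exact ⟨X, hX0, hXdense, hX.symm⟩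

theorem exists_ne_bot_of_mk_lt_piDensity (S : Set B) (hS : #S < piDensity B) :
    ∃ c : B, c ≠ ⊥ ∧ ∀ s ∈ S, s ≤ c → s = ⊥ := by
  by_contra! h
  have hdense : piDensity B ≤ #(S \ {⊥} : Set B) := csInf_le' ⟨S \ {⊥},
    fun _ hx => hx.2, fun a ha => (h a ha).imp fun s hs => ⟨⟨hs.1, hs.2.2⟩, hs.2.1⟩, rfl⟩
  exact (hdense.trans (mk_le_mk_of_subset Set.sdiff_subset)).not_gt hS

end Density

theorem exists_injective_lt_ord (α : Type u) :
    ∃ o : α → Ordinal.{u}, Injective o ∧ ∀ a, o a < (#α).ord := by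
  obtain ⟨r, _, hr⟩ := Cardinal.exists_ord_eq α
  exact ⟨Ordinal.typein r, Ordinal.typein_injective r, fun a => hr ▸ Ordinal.typein_lt_type r a⟩

theorem mk_subtype_lt_le_card_of_injective {α : Type u} {o : α → Ordinal.{u}} (ho : Injective o)
    (β : Ordinal.{u}) : #{a // o a < β} ≤ β.card := by
  rw [← lift_le.{u + 1}, ← mk_Iio_ordinal]
  exact (lift_mk_le_lift_mk_of_injective (β := Set.Iio β) (f := fun a => ⟨o a.1, a.2⟩)
    fun a b h => Subtype.ext (ho (congrArg Subtype.val h))).trans_eq (lift_id'.{u, u + 1} _)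

namespace BUP

variable {ι : Type u} {D : Ultrafilter ι} {A : ι → Type u} [∀ i, BooleanAlgebra (A i)]

variable (D) in
def mk (f : ∀ i, A i) : BUP D A :=
  toBoolAlg (Ideal.Quotient.mk (upIdeal D A) fun i => toBoolRing (f i))

theorem mk_surjective : Surjective (mk D : (∀ i, A i) → BUP D A) := fun a => by
  obtain ⟨g, hg⟩ := Ideal.Quotient.mk_surjective (ofBoolAlg a)
  exact ⟨fun i => ofBoolRing (g i), (congrArg toBoolAlg hg).trans (toBoolAlg_ofBoolAlg a)⟩

theorem mk_eq_mk_iff {f g : ∀ i, A i} : mk D f = mk D g ↔ ∀ᶠ i in D, f i = g i := by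
  refine (toBoolAlg.injective.eq_iff.trans Ideal.Quotient.eq).trans ?_
  change {i | toBoolRing (f i) - toBoolRing (g i) = 0} ∈ D ↔ _
  simp only [sub_eq_zero, toBoolRing.injective.eq_iff]
  rfl

theorem mk_inf (f g : ∀ i, A i) : mk D (f ⊓ g) = mk D f ⊓ mk D g :=
  (congrArg toBoolAlg (map_mul (Ideal.Quotient.mk (upIdeal D A)) _ _)).trans (toBoolAlg_mul _ _)

theorem mk_bot : mk D (⊥ : ∀ i, A i) = ⊥ :=
  (congrArg toBoolAlg (map_zero (Ideal.Quotient.mk (upIdeal D A)))).trans toBoolAlg_zero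

theorem mk_le_mk_iff {f g : ∀ i, A i} : mk D f ≤ mk D g ↔ ∀ᶠ i in D, f i ≤ g i := by
  simp only [← inf_eq_left, ← mk_inf, mk_eq_mk_iff, Pi.inf_apply]

theorem mk_ne_bot_iff {f : ∀ i, A i} : mk D f ≠ ⊥ ↔ ∀ᶠ i in D, f i ≠ ⊥ := by
  rw [Ne, ← mk_bot, mk_eq_mk_iff, ← Ultrafilter.eventually_not]
  rfl

theorem exists_eventually_le_of_dense (X : Set (BUP D A)) (hX0 : ∀ x ∈ X, x ≠ ⊥)
    (hXdense : ∀ a : BUP D A, a ≠ ⊥ → ∃ x ∈ X, x ≤ a) (o : X → Ordinal.{u})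
    (f : ι → Ordinal.{u}) (hsmall : ∀ i, #{x : X // o x < f i} < piDensity (A i)) :
    ∃ x : X, ∀ᶠ i in D, f i ≤ o x := by
  choose r hr using fun x : X => mk_surjective x.1
  have hc : ∀ i, ∃ c : A i, c ≠ ⊥ ∧ ∀ x : X, o x < f i → r x i ≤ c → r x i = ⊥ := fun i =>
    (exists_ne_bot_of_mk_lt_piDensity (Set.range fun x : {x : X // o x < f i} => r x i)
      (mk_range_le.trans_lt (hsmall i))).imp
      fun c ⟨hc, hcS⟩ => ⟨hc, fun x hx => hcS _ ⟨⟨x, hx⟩, rfl⟩⟩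
  choose c hc0 hcS using hc
  obtain ⟨y, hyX, hyc⟩ := hXdense (mk D c) (mk_ne_bot_iff.2 (.of_forall hc0))
  refine ⟨⟨y, hyX⟩, ?_⟩
  have hle : ∀ᶠ i in D, r ⟨y, hyX⟩ i ≤ c i := mk_le_mk_iff.1 ((hr _).trans_le hyc)
  have hne : ∀ᶠ i in D, r ⟨y, hyX⟩ i ≠ ⊥ := mk_ne_bot_iff.1 ((hr _).trans_ne (hX0 y hyX))
  filter_upwards [hle, hne] with i hlei hnei
  by_contra! hlt
  exact hnei (hcS i _ hlt hlei)

end BUP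

theorem bounded_of_piDensity_eq_general {ι : Type u} (D : Ultrafilter ι) (A : ι → Type u)
    [∀ i, BooleanAlgebra (A i)] (lam : Cardinal.{u})
    (hpi : piDensity (BUP D A) = lam) :
    ∀ f : ι → Ordinal.{u}, (∀ i, f i < (piDensity (A i)).ord) →
      ∃ α < lam.ord, {i | f i ≤ α} ∈ D := by
  intro f hf
  obtain ⟨X, hX0, hXdense, hXcard⟩ := exists_dense_mk_eq_piDensity (B := BUP D A)
  obtain ⟨o, ho, ho_lt⟩ := exists_injective_lt_ord X
  obtain ⟨x, hx⟩ := BUP.exists_eventually_le_of_dense X hX0 hXdense o f fun i =>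
    (mk_subtype_lt_le_card_of_injective ho (f i)).trans_lt (lt_ord.1 (hf i))
  exact ⟨o x, hpi ▸ hXcard ▸ ho_lt x, hx⟩

/-- Claim 4 of Theorem 1.1: if `π (∏ Aᵢ / D) = lam` where `π Aᵢ ≤ lam` for all `i`, then
every `f ∈ ∏ᵢ π(Aᵢ)` is bounded below `lam` modulo `D`. -/
theorem bounded_of_piDensity_eq {ι : Type u} (D : Ultrafilter ι) (A : ι → Type u)
    [∀ i, BooleanAlgebra (A i)] [∀ i, Infinite (A i)] (lam : Cardinal.{u})
    (hle : ∀ i, piDensity (A i) ≤ lam)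
    (hpi : piDensity (BUP D A) = lam) :
    ∀ f : ι → Ordinal.{u}, (∀ i, f i < (piDensity (A i)).ord) →
      ∃ α < lam.ord, {i | f i ≤ α} ∈ D :=
  bounded_of_piDensity_eq_general D A lam hpi
end

section
/- Let U be an infinite set, Fr(U) the free Boolean algebra on U with completion Ā. Suppose (s_n)_{n∈ω} are nonzero elements of Fr(U) whose supports are pairwise disjoint. Then ⋁_{n∈ω} s_n = 1 in Ā; consequently, setting d_n = s_n · ∏_{m<n} ¬s_m, the family {d_n : n ∈ ω} is a partition of unity in Ā. -/
/-!
Every `b ∈ Fr(U)` is decided by a finite set `F` of generators: each elementary product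
`⋀_{i ∈ T} uᵢ ⊓ ⋀_{i ∈ F \ T} uᵢᶜ` is below `b` or below `bᶜ`; since these products cover `⊤`,
a nonzero `b` lies above one of them. Elementary products over disjoint sets of generators
combine into an elementary product over their union, which is nonzero by independence, so
nonzero elements with disjoint supports meet. If `⨆ₙ sₙ ≠ ⊤`, density yields a nonzero
`f ∈ Fr(U)` below `(⨆ₙ sₙ)ᶜ`; its finite support meets only finitely many of the pairwise
disjoint supports of the `sₙ`, so `f ⊓ sₙ ≠ ⊥` for some `n`, a contradiction. The family `dₙ`
is Mathlib's `disjointed s`.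
-/

/-- The elements of the Boolean subalgebra generated by a set `S`. -/
inductive BAGen {α : Type v} [BooleanAlgebra α] (S : Set α) : α → Prop
  | base {a : α} : a ∈ S → BAGen S a
  | bot : BAGen S ⊥
  | sup {a b : α} : BAGen S a → BAGen S b → BAGen S (a ⊔ b)
  | compl {a : α} : BAGen S a → BAGen S aᶜ

section ElemProd

variable {α ι : Type*} [BooleanAlgebra α] [DecidableEq ι] (u : ι → α)

def elemProd (F T : Finset ι) : α :=
  T.inf u ⊓ (F \ T).inf fun i => (u i)ᶜ

theorem elemProd_le_elemProd_inter {F F' : Finset ι} (hF : F ⊆ F') (T : Finset ι) :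
    elemProd u F' T ≤ elemProd u F (T ∩ F) := by
  refine inf_le_inf (Finset.inf_mono Finset.inter_subset_left) (Finset.inf_mono ?_)
  intro i hi
  simp only [Finset.mem_sdiff, Finset.mem_inter, not_and] at hi ⊢
  exact ⟨hF hi.1, fun hT => hi.2 hT hi.1⟩

theorem elemProd_insert_of_notMem {F T : Finset ι} {a : ι} (ha : a ∉ T) :
    elemProd u (insert a F) T = (u a)ᶜ ⊓ elemProd u F T := by
  rw [elemProd, elemProd, Finset.insert_sdiff_of_notMem _ ha, Finset.inf_insert, inf_left_comm]

theorem elemProd_insert_insert {F T : Finset ι} {a : ι} (ha : a ∉ F) :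
    elemProd u (insert a F) (insert a T) = u a ⊓ elemProd u F T := by
  rw [elemProd, elemProd, Finset.insert_sdiff_insert, Finset.sdiff_insert_of_notMem ha,
    Finset.inf_insert, inf_assoc]

theorem sup_powerset_elemProd (F : Finset ι) : F.powerset.sup (elemProd u F) = ⊤ := by
  induction F using Finset.induction_on with
  | empty => simp [elemProd]
  | @insert a F ha ih =>
    have hT : ∀ T ∈ F.powerset, a ∉ T := fun T hT h => ha (Finset.mem_powerset.mp hT h)
    rw [Finset.powerset_insert, Finset.sup_union, Finset.sup_image]
    calc _ = F.powerset.sup (fun T => (u a)ᶜ ⊓ elemProd u F T) ⊔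
          F.powerset.sup (fun T => u a ⊓ elemProd u F T) := by
            congr 1
            · exact Finset.sup_congr rfl fun T hT' => elemProd_insert_of_notMem u (hT T hT')
            · exact Finset.sup_congr rfl fun T _ => elemProd_insert_insert u ha
      _ = ⊤ := by
            rw [← Finset.sup_inf_distrib_left, ← Finset.sup_inf_distrib_left, ih, inf_top_eq,
              inf_top_eq, compl_sup_eq_top]

def Decides (F : Finset ι) (a : α) : Prop :=
  ∀ T ⊆ F, elemProd u F T ≤ a ∨ elemProd u F T ≤ aᶜ

variable {u}

theorem Decides.mono {F F' : Finset ι} {a : α} (h : Decides u F a) (hF : F ⊆ F') :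
    Decides u F' a := fun T _ =>
  (h (T ∩ F) Finset.inter_subset_right).imp (elemProd_le_elemProd_inter u hF T).trans
    (elemProd_le_elemProd_inter u hF T).trans

theorem Decides.compl {F : Finset ι} {a : α} (h : Decides u F a) : Decides u F aᶜ :=
  fun T hT => (h T hT).symm.imp id fun h => h.trans (compl_compl a).ge

theorem Decides.sup {F : Finset ι} {a b : α} (ha : Decides u F a) (hb : Decides u F b) :
    Decides u F (a ⊔ b) := by
  intro T hT
  rw [compl_sup]
  rcases ha T hT with ha | ha
  · exact Or.inl (le_sup_of_le_left ha)
  · exact (hb T hT).imp le_sup_of_le_right (le_inf ha)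

theorem exists_decides_of_bagen {A : Set ι} {a : α} (h : BAGen (u '' A) a) :
    ∃ F : Finset ι, ↑F ⊆ A ∧ Decides u F a := by
  induction h with
  | base ha =>
    obtain ⟨i, hi, rfl⟩ := ha
    refine ⟨{i}, by simpa using hi, fun T hT => ?_⟩
    rcases Finset.subset_singleton_iff.mp hT with rfl | rfl <;> simp [elemProd]
  | bot => exact ⟨∅, by simp, fun T _ => Or.inr (by simp)⟩
  | sup _ _ iha ihb =>
    obtain ⟨F, hFA, hF⟩ := iha
    obtain ⟨G, hGA, hG⟩ := ihb
    exact ⟨F ∪ G, by simp [hFA, hGA],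
      (hF.mono Finset.subset_union_left).sup (hG.mono Finset.subset_union_right)⟩
  | compl _ ih =>
    obtain ⟨F, hFA, hF⟩ := ih
    exact ⟨F, hFA, hF.compl⟩

theorem Decides.exists_elemProd_le {F : Finset ι} {a : α} (h : Decides u F a) (ha : a ≠ ⊥) :
    ∃ T ⊆ F, elemProd u F T ≤ a := by
  by_contra! hlt
  have : F.powerset.sup (elemProd u F) ≤ aᶜ := Finset.sup_le fun T hT =>
    (h T (Finset.mem_powerset.mp hT)).resolve_left (hlt T (Finset.mem_powerset.mp hT))
  rw [sup_powerset_elemProd, top_le_iff, compl_eq_top] at this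
  exact ha this

theorem Decides.inf_ne_bot
    (hind : ∀ s t : Finset ι, (∀ i ∈ s, i ∉ t) → s.inf u ⊓ t.inf (fun i => (u i)ᶜ) ≠ ⊥)
    {F G : Finset ι} {a b : α} (hFG : Disjoint F G) (hFa : Decides u F a) (hGb : Decides u G b)
    (ha : a ≠ ⊥) (hb : b ≠ ⊥) : a ⊓ b ≠ ⊥ := by
  obtain ⟨T, hTF, hTa⟩ := hFa.exists_elemProd_le ha
  obtain ⟨T', hTG, hTb⟩ := hGb.exists_elemProd_le hb
  have hF : (T ∪ T') ∩ F = T := by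
    rw [Finset.union_inter_distrib_right, Finset.inter_eq_left.mpr hTF,
      Finset.disjoint_iff_inter_eq_empty.mp (hFG.symm.mono_left hTG), Finset.union_empty]
  have hG : (T ∪ T') ∩ G = T' := by
    rw [Finset.union_inter_distrib_right, Finset.inter_eq_left.mpr hTG,
      Finset.disjoint_iff_inter_eq_empty.mp (hFG.mono_left hTF), Finset.empty_union]
  have hle : elemProd u (F ∪ G) (T ∪ T') ≤ a ⊓ b := by
    have hleF := elemProd_le_elemProd_inter u (Finset.subset_union_left : F ⊆ F ∪ G) (T ∪ T')
    have hleG := elemProd_le_elemProd_inter u (Finset.subset_union_right : G ⊆ F ∪ G) (T ∪ T')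
    rw [hF] at hleF
    rw [hG] at hleG
    exact le_inf (hleF.trans hTa) (hleG.trans hTb)
  have hne : elemProd u (F ∪ G) (T ∪ T') ≠ ⊥ :=
    hind _ _ fun i hi hi' => (Finset.mem_sdiff.mp hi').2 hi
  exact fun h => hne (le_bot_iff.mp (h ▸ hle))

end ElemProd

theorem exists_disjoint_of_pairwise_disjoint {α ι : Type*} [Infinite ι] {S : ι → Set α}
    (hS : Pairwise (Function.onFun Disjoint S)) {F : Set α} (hF : F.Finite) :
    ∃ n, Disjoint F (S n) := by
  have hmeet : {n | ¬Disjoint F (S n)} ⊆ ⋃ i ∈ F, {n | i ∈ S n} := fun n hn => by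
    obtain ⟨i, hiF, hiS⟩ := Set.not_disjoint_iff.mp hn
    exact Set.mem_biUnion hiF hiS
  have hfin : {n | ¬Disjoint F (S n)}.Finite := by
    refine (hF.biUnion fun i _ => Set.Subsingleton.finite ?_).subset hmeet
    exact fun n hn m hm => by_contra fun hnm => Set.disjoint_left.mp (hS hnm) hn hm
  obtain ⟨n, hn⟩ := hfin.infinite_compl.nonempty
  exact ⟨n, not_not.mp hn⟩

theorem disjointed_eq_inf_inf_range_compl {α : Type*} [BooleanAlgebra α] (f : ℕ → α) (n : ℕ) :
    disjointed f n = f n ⊓ (Finset.range n).inf fun k => (f k)ᶜ := by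
  rw [disjointed_apply, Nat.Iio_eq_range, sdiff_eq, Finset.compl_sup]

theorem sup_eq_top_of_disjoint_supports_general {Abar : Type u} [CompleteBooleanAlgebra Abar]
    {U : Type u} (u : U → Abar)
    (hind : ∀ s t : Finset U, (∀ i ∈ s, i ∉ t) →
      s.inf u ⊓ t.inf (fun i => (u i)ᶜ) ≠ ⊥)
    (hdense : ∀ a : Abar, a ≠ ⊥ → ∃ f : Abar, BAGen (Set.range u) f ∧ ⊥ < f ∧ f ≤ a)
    (s : ℕ → Abar) (hne : ∀ n, s n ≠ ⊥)
    (hsupp : ∃ S : ℕ → Set U, Pairwise (Function.onFun Disjoint S) ∧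
      ∀ n, BAGen (u '' S n) (s n)) :
    (⨆ n, s n) = ⊤ ∧
      (Pairwise fun n m => (s n ⊓ (Finset.range n).inf fun k => (s k)ᶜ) ⊓
        (s m ⊓ (Finset.range m).inf fun k => (s k)ᶜ) = ⊥) ∧
      (⨆ n, s n ⊓ (Finset.range n).inf fun k => (s k)ᶜ) = ⊤ := by
  classical
  obtain ⟨S, hS, hsS⟩ := hsupp
  have hsup : (⨆ n, s n) = ⊤ := by
    by_contra htop
    obtain ⟨f, hf, hf0, hfle⟩ := hdense _ (mt compl_eq_bot.mp htop)
    obtain ⟨F, -, hF⟩ := exists_decides_of_bagen (Set.image_univ.symm ▸ hf)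
    obtain ⟨n, hFn⟩ := exists_disjoint_of_pairwise_disjoint hS F.finite_toSet
    obtain ⟨G, hGS, hG⟩ := exists_decides_of_bagen (hsS n)
    have hfs : f ≤ (s n)ᶜ := hfle.trans (compl_le_compl (le_iSup s n))
    exact hF.inf_ne_bot hind (Finset.disjoint_coe.mp (hFn.mono_right hGS)) hG hf0.ne' (hne n)
      (le_compl_iff_disjoint_right.mp hfs).eq_bot
  simp_rw [← disjointed_eq_inf_inf_range_compl]
  exact ⟨hsup, fun n m hnm => (disjoint_disjointed s hnm).eq_bot, (iSup_disjointed s).trans hsup⟩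

/-- Step 8 of the proof of Theorem B: let `Ā` be the completion of the free Boolean
algebra `Fr(U)` on the infinite set `U` of independent generators `u`, realized as a
complete Boolean algebra in which `Fr(U) = ⟨range u⟩` is dense. If `(s n)` are nonzero
elements of `Fr(U)` with pairwise disjoint supports, then `⋁ₙ s n = 1`, and with
`d n = s n ⊓ ⨅_{m<n} (s m)ᶜ`, the family `{d n}` is a partition of unity in `Ā`. -/
theorem sup_eq_top_of_disjoint_supports {Abar : Type u} [CompleteBooleanAlgebra Abar]
    {U : Type u} [Infinite U] (u : U → Abar)
    (hind : ∀ s t : Finset U, (∀ i ∈ s, i ∉ t) →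
      s.inf u ⊓ t.inf (fun i => (u i)ᶜ) ≠ ⊥)
    (hdense : ∀ a : Abar, a ≠ ⊥ → ∃ f : Abar, BAGen (Set.range u) f ∧ ⊥ < f ∧ f ≤ a)
    (s : ℕ → Abar) (hmem : ∀ n, BAGen (Set.range u) (s n)) (hne : ∀ n, s n ≠ ⊥)
    (hsupp : ∃ S : ℕ → Set U, Pairwise (Function.onFun Disjoint S) ∧
      ∀ n, BAGen (u '' S n) (s n)) :
    (⨆ n, s n) = ⊤ ∧
      (Pairwise fun n m => (s n ⊓ (Finset.range n).inf fun k => (s k)ᶜ) ⊓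
        (s m ⊓ (Finset.range m).inf fun k => (s k)ᶜ) = ⊥) ∧
      (⨆ n, s n ⊓ (Finset.range n).inf fun k => (s k)ᶜ) = ⊤ :=
  sup_eq_top_of_disjoint_supports_general u hind hdense s hne hsupp
end
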